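/- arXiv:2604.08607 — 2 statements merged into one kernel-verified Lean document; each statement's English description precedes it below -/
import Mathlib

section
/- Pairwise task-difference bound (Step 1 of the proof of Theorem 1): Let D^t, D^i be Borel probability measures on a metric space X, let f_t, f_i : X → ℝ be bounded measurable ground-truth labeling functions, let K > 0, and let W be a dual Wasserstein bound for (D^i, D^t). Then for any bounded measurable K-Lipschitz functions h, h'' : X → ℝ, |L_{D^i}(h, f_i) − L_{D^t}(h, f_t)| ≤ L_{D^i}(h'', f_i) + L_{D^t}(h'', f_t) + 2K·W. -/
open MeasureTheory

/-- Expected loss `L_μ(u, v) = ∫ |u(x) − v(x)| dμ(x)`. -/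
noncomputable def expLoss {X : Type*} [MeasurableSpace X] (μ : Measure X)
    (u v : X → ℝ) : ℝ :=
  ∫ x, |u x - v x| ∂μ

/-- A function is bounded if its absolute values are uniformly bounded. -/
def BoundedFun {X : Type*} (g : X → ℝ) : Prop := ∃ C : ℝ, ∀ x, |g x| ≤ C

/-- `g : X → ℝ` is `K`-Lipschitz if `|g(x) − g(y)| ≤ K · d(x, y)` for all `x, y`. -/
def LipschitzCoef {X : Type*} [MetricSpace X] (K : ℝ) (g : X → ℝ) : Prop :=
  ∀ x y, |g x - g y| ≤ K * dist x y

/-- `W` is a dual Wasserstein bound for `(μ, ν)` if `|∫ f dμ − ∫ f dν| ≤ W`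
for every bounded 1-Lipschitz `f : X → ℝ`. -/
def DualWassersteinBound {X : Type*} [MetricSpace X] [MeasurableSpace X]
    (μ ν : Measure X) (W : ℝ) : Prop :=
  ∀ f : X → ℝ, BoundedFun f → LipschitzCoef 1 f →
    |(∫ x, f x ∂μ) - ∫ x, f x ∂ν| ≤ W

lemma integ_abs_sub {X : Type*} [MeasurableSpace X] (μ : Measure X) [IsFiniteMeasure μ]
    {u v : X → ℝ} (hu : Measurable u) (hv : Measurable v)
    (hub : BoundedFun u) (hvb : BoundedFun v) :
    Integrable (fun x => |u x - v x|) μ := by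
  obtain ⟨C, hC⟩ := hub
  obtain ⟨D, hD⟩ := hvb
  refine ⟨((hu.sub hv).abs).aestronglyMeasurable,
    HasFiniteIntegral.of_bounded (C := C + D) (Filter.Eventually.of_forall fun x => ?_)⟩
  simp only [Real.norm_eq_abs, abs_abs]
  exact (abs_sub _ _).trans (add_le_add (hC x) (hD x))

/-- Pairwise task-difference bound (Step 1 of the proof of Theorem 1):
`|L_{Di}(h, f_i) − L_{Dt}(h, f_t)| ≤ L_{Di}(h'', f_i) + L_{Dt}(h'', f_t) + 2K·W`. -/
theorem pairwise_task_difference_bound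
    {X : Type*} [MetricSpace X] [MeasurableSpace X] [BorelSpace X]
    (Dt Di : Measure X) [IsProbabilityMeasure Dt] [IsProbabilityMeasure Di]
    (ft fi : X → ℝ)
    (ftb : BoundedFun ft) (ftm : Measurable ft)
    (fib : BoundedFun fi) (fim : Measurable fi)
    (K : ℝ) (hK : 0 < K)
    (W : ℝ) (hW : DualWassersteinBound Di Dt W)
    (h h'' : X → ℝ)
    (hb : BoundedFun h) (hm : Measurable h) (hl : LipschitzCoef K h)
    (h''b : BoundedFun h'') (h''m : Measurable h'') (h''l : LipschitzCoef K h'') :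
    |expLoss Di h fi - expLoss Dt h ft| ≤
      expLoss Di h'' fi + expLoss Dt h'' ft + 2 * K * W := by
  have Ihfi : Integrable (fun x => |h x - fi x|) Di := integ_abs_sub Di hm fim hb fib
  have Ihft : Integrable (fun x => |h x - ft x|) Dt := integ_abs_sub Dt hm ftm hb ftb
  have Ihh_i : Integrable (fun x => |h x - h'' x|) Di := integ_abs_sub Di hm h''m hb h''b
  have Ihh_t : Integrable (fun x => |h x - h'' x|) Dt := integ_abs_sub Dt hm h''m hb h''b
  have Ih''fi : Integrable (fun x => |h'' x - fi x|) Di := integ_abs_sub Di h''m fim h''b fib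
  have Ih''ft : Integrable (fun x => |h'' x - ft x|) Dt := integ_abs_sub Dt h''m ftm h''b ftb
  set Mi := ∫ x, |h x - h'' x| ∂Di with hMi
  set Mt := ∫ x, |h x - h'' x| ∂Dt with hMt
  have key1 : |expLoss Di h fi - Mi| ≤ expLoss Di h'' fi := by
    rw [expLoss, hMi, ← integral_sub Ihfi Ihh_i]
    calc |∫ x, (|h x - fi x| - |h x - h'' x|) ∂Di|
        ≤ ∫ x, abs (|h x - fi x| - |h x - h'' x|) ∂Di := by
          simpa [Real.norm_eq_abs] using
            norm_integral_le_integral_norm (μ := Di) (fun x => |h x - fi x| - |h x - h'' x|)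
      _ ≤ ∫ x, |h'' x - fi x| ∂Di := by
          refine integral_mono (Ihfi.sub Ihh_i).abs Ih''fi fun x => ?_
          have := abs_abs_sub_abs_le_abs_sub (h x - fi x) (h x - h'' x)
          have e : (h x - fi x) - (h x - h'' x) = h'' x - fi x := by ring
          rwa [e] at this
  have key2 : |Mt - expLoss Dt h ft| ≤ expLoss Dt h'' ft := by
    rw [expLoss, hMt, ← integral_sub Ihh_t Ihft]
    calc |∫ x, (|h x - h'' x| - |h x - ft x|) ∂Dt|
        ≤ ∫ x, abs (|h x - h'' x| - |h x - ft x|) ∂Dt := by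
          simpa [Real.norm_eq_abs] using
            norm_integral_le_integral_norm (μ := Dt) (fun x => |h x - h'' x| - |h x - ft x|)
      _ ≤ ∫ x, |h'' x - ft x| ∂Dt := by
          refine integral_mono (Ihh_t.sub Ihft).abs Ih''ft fun x => ?_
          have := abs_abs_sub_abs_le_abs_sub (h x - h'' x) (h x - ft x)
          have e : (h x - h'' x) - (h x - ft x) = -(h'' x - ft x) := by ring
          rw [e, abs_neg] at this
          exact this
  have key3 : |Mi - Mt| ≤ 2 * K * W := by
    set g : X → ℝ := fun x => |h x - h'' x| / (2 * K) with hg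
    obtain ⟨Ch, hCh⟩ := hb
    obtain ⟨Ch'', hCh''⟩ := h''b
    have hgb : BoundedFun g := by
      refine ⟨(Ch + Ch'') / (2 * K), fun x => ?_⟩
      rw [hg, abs_div, abs_of_pos (by linarith : (0:ℝ) < 2 * K), abs_abs]
      exact div_le_div_of_nonneg_right ((abs_sub _ _).trans (add_le_add (hCh x) (hCh'' x)))
        (by linarith) |>.trans_eq rfl
    have hgl : LipschitzCoef 1 g := by
      intro x y
      rw [hg]
      have h1 : abs (|h x - h'' x| - |h y - h'' y|) ≤ 2 * K * dist x y := by
        have := abs_abs_sub_abs_le_abs_sub (h x - h'' x) (h y - h'' y)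
        have e : (h x - h'' x) - (h y - h'' y) = (h x - h y) + (h'' y - h'' x) := by ring
        rw [e] at this
        have h2 : |(h x - h y) + (h'' y - h'' x)| ≤ |h x - h y| + |h'' y - h'' x| := abs_add_le _ _
        have h3 := hl x y
        have h4 := h''l y x
        rw [dist_comm y x] at h4
        linarith [this.trans h2]
      rw [div_sub_div_same, abs_div, abs_of_pos (by linarith : (0:ℝ) < 2 * K),
        div_le_iff₀ (by linarith : (0:ℝ) < 2 * K)]
      calc abs (|h x - h'' x| - |h y - h'' y|) ≤ 2 * K * dist x y := h1
        _ = 1 * dist x y * (2 * K) := by ring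
    have hWg := hW g hgb hgl
    have hgi : ∫ x, g x ∂Di = Mi / (2 * K) := by rw [hg, integral_div, hMi]
    have hgt : ∫ x, g x ∂Dt = Mt / (2 * K) := by rw [hg, integral_div, hMt]
    rw [hgi, hgt, div_sub_div_same, abs_div, abs_of_pos (by linarith : (0:ℝ) < 2 * K),
      div_le_iff₀ (by linarith : (0:ℝ) < 2 * K)] at hWg
    calc |Mi - Mt| ≤ W * (2 * K) := hWg
      _ = 2 * K * W := by ring
  calc |expLoss Di h fi - expLoss Dt h ft|
      ≤ |expLoss Di h fi - Mi| + |Mi - expLoss Dt h ft| := abs_sub_le _ _ _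
    _ ≤ |expLoss Di h fi - Mi| + (|Mi - Mt| + |Mt - expLoss Dt h ft|) := by
        linarith [abs_sub_le Mi Mt (expLoss Dt h ft)]
    _ ≤ expLoss Di h'' fi + expLoss Dt h'' ft + 2 * K * W := by linarith
end

section
/- Per-task weighted bound (Step 1 of the proof of Theorem 1): Let H be a nonempty family of bounded measurable K-Lipschitz functions X → ℝ with K > 0, let D^1, …, D^T be Borel probability measures on the metric space X with bounded measurable ground-truth labeling functions f_1, …, f_T : X → ℝ, and write L_j(h) = L_{D^j}(h, f_j) and ξ_{t,i} = inf_{h ∈ H} (L_t(h) + L_i(h)). Fix a task t ∈ {1, …, T}, let α ∈ Δ_T, and for each i ∈ {1, …, T} let W_i be a dual Wasserstein bound for (D^i, D^t). Then for every h ∈ H: L_t(h) ≤ Σ_{i=1}^T α_i L_i(h) + Σ_{i=1}^T α_i ξ_{t,i} + 2K Σ_{i=1}^T α_i W_i. -/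
open MeasureTheory

/-! Subtracting the triangle inequalities `L_t(h) ≤ L_t(h, g) + L_t(g)` and
`L_i(h, g) ≤ L_i(h) + L_i(g)` for a competitor `g ∈ H` leaves the difference
`L_t(h, g) - L_i(h, g)`. The function `|h - g|` is bounded and `2K`-Lipschitz, so this
difference is at most `2K W_i` by the dual Wasserstein bound. Hence
`L_t(h) ≤ L_i(h) + (L_t(g) + L_i(g)) + 2K W_i`; taking the infimum over `g` and averaging
over `i` with the weights `α` gives the claim. -/

section Bounds

variable {X : Type*}

lemma BoundedFun.abs_sub {u v : X → ℝ} (hu : BoundedFun u) (hv : BoundedFun v) :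
    BoundedFun fun x => |u x - v x| := by
  obtain ⟨C, hC⟩ := hu
  obtain ⟨C', hC'⟩ := hv
  refine ⟨C + C', fun x => ?_⟩
  rw [abs_abs]
  linarith [_root_.abs_sub (u x) (v x), hC x, hC' x]

lemma BoundedFun.const_mul {u : X → ℝ} (hu : BoundedFun u) (c : ℝ) :
    BoundedFun fun x => c * u x := by
  obtain ⟨C, hC⟩ := hu
  exact ⟨|c| * C, fun x => by rw [abs_mul]; exact mul_le_mul_of_nonneg_left (hC x) (abs_nonneg c)⟩

lemma BoundedFun.integrable [MeasurableSpace X] {μ : Measure X} [IsFiniteMeasure μ]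
    {u : X → ℝ} (hu : BoundedFun u) (hm : Measurable u) : Integrable u μ := by
  obtain ⟨C, hC⟩ := hu
  exact .of_bound hm.aestronglyMeasurable C (.of_forall hC)

variable [MetricSpace X]

lemma LipschitzCoef.abs_sub {K K' : ℝ} {u v : X → ℝ} (hu : LipschitzCoef K u)
    (hv : LipschitzCoef K' v) : LipschitzCoef (K + K') fun x => |u x - v x| := fun x y =>
  calc abs (|u x - v x| - |u y - v y|) ≤ |(u x - u y) - (v x - v y)| := by
        rw [sub_sub_sub_comm]; exact abs_abs_sub_abs_le_abs_sub _ _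
    _ ≤ |u x - u y| + |v x - v y| := _root_.abs_sub _ _
    _ ≤ (K + K') * dist x y := by linarith [hu x y, hv x y]

lemma LipschitzCoef.const_mul {K c : ℝ} {u : X → ℝ} (hu : LipschitzCoef K u) (hc : 0 ≤ c) :
    LipschitzCoef (c * K) fun x => c * u x := fun x y => by
  rw [← mul_sub, abs_mul, abs_of_nonneg hc, mul_assoc]
  exact mul_le_mul_of_nonneg_left (hu x y) hc

end Bounds

section Loss

variable {X : Type*} [MeasurableSpace X]

lemma expLoss_comm (μ : Measure X) (u v : X → ℝ) : expLoss μ u v = expLoss μ v u := by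
  simp only [expLoss, abs_sub_comm]

lemma expLoss_le_add {μ : Measure X} {u v w : X → ℝ} (hu : Integrable u μ)
    (hv : Integrable v μ) (hw : Integrable w μ) :
    expLoss μ u w ≤ expLoss μ u v + expLoss μ v w := by
  have huv : Integrable (fun x => |u x - v x|) μ := (hu.sub hv).abs
  have hvw : Integrable (fun x => |v x - w x|) μ := (hv.sub hw).abs
  rw [expLoss, expLoss, expLoss, ← integral_add huv hvw]
  exact integral_mono (hu.sub hw).abs (huv.add hvw) fun x => abs_sub_le _ _ _

variable [MetricSpace X] {μ ν : Measure X} {W : ℝ}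

lemma DualWassersteinBound.abs_integral_sub_le (hW : DualWassersteinBound μ ν W) {L : ℝ}
    (hL : 0 < L) {φ : X → ℝ} (hb : BoundedFun φ) (hl : LipschitzCoef L φ) :
    |(∫ x, φ x ∂μ) - ∫ x, φ x ∂ν| ≤ L * W := by
  have hl' : LipschitzCoef 1 fun x => L⁻¹ * φ x := by
    simpa only [inv_mul_cancel₀ hL.ne'] using hl.const_mul (inv_nonneg.2 hL.le)
  have := hW _ (hb.const_mul L⁻¹) hl'
  rw [integral_const_mul, integral_const_mul, ← mul_sub, abs_mul,
    abs_of_pos (inv_pos.2 hL)] at this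
  exact (inv_mul_le_iff₀ hL).1 this

lemma expLoss_le_add_of_dualWassersteinBound (hW : DualWassersteinBound μ ν W) {K : ℝ}
    (hK : 0 < K) {u v : X → ℝ} (hu : BoundedFun u) (hv : BoundedFun v)
    (hul : LipschitzCoef K u) (hvl : LipschitzCoef K v) :
    expLoss ν u v ≤ expLoss μ u v + 2 * K * W := by
  have := hW.abs_integral_sub_le (by positivity) (hu.abs_sub hv) (hul.abs_sub hvl)
  rw [expLoss, expLoss]
  linarith [(abs_le.1 this).1]

variable [IsFiniteMeasure μ] [IsFiniteMeasure ν] {K : ℝ} {h g fμ fν : X → ℝ}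

lemma expLoss_le_add_jointError (hW : DualWassersteinBound μ ν W) (hK : 0 < K)
    (hhb : BoundedFun h) (hgb : BoundedFun g) (hfμb : BoundedFun fμ) (hfνb : BoundedFun fν)
    (hhm : Measurable h) (hgm : Measurable g) (hfμm : Measurable fμ) (hfνm : Measurable fν)
    (hhl : LipschitzCoef K h) (hgl : LipschitzCoef K g) :
    expLoss ν h fν ≤ expLoss μ h fμ + (expLoss ν g fν + expLoss μ g fμ) + 2 * K * W := by
  have hν := expLoss_le_add (μ := ν) (hhb.integrable hhm) (hgb.integrable hgm)
    (hfνb.integrable hfνm)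
  have hμ := expLoss_le_add (μ := μ) (hhb.integrable hhm) (hfμb.integrable hfμm)
    (hgb.integrable hgm)
  have htransfer := expLoss_le_add_of_dualWassersteinBound hW hK hhb hgb hhl hgl
  rw [expLoss_comm μ fμ g] at hμ
  linarith

lemma expLoss_le_add_iInf_jointError (hW : DualWassersteinBound μ ν W) (hK : 0 < K)
    {H : Set (X → ℝ)} (hHb : ∀ g ∈ H, BoundedFun g) (hHm : ∀ g ∈ H, Measurable g)
    (hHl : ∀ g ∈ H, LipschitzCoef K g) (hh : h ∈ H)
    (hfμb : BoundedFun fμ) (hfνb : BoundedFun fν) (hfμm : Measurable fμ)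
    (hfνm : Measurable fν) :
    expLoss ν h fν ≤ expLoss μ h fμ
      + (⨅ g : H, (expLoss ν (g : X → ℝ) fν + expLoss μ (g : X → ℝ) fμ)) + 2 * K * W := by
  have : Nonempty H := ⟨⟨h, hh⟩⟩
  have : expLoss ν h fν - expLoss μ h fμ - 2 * K * W
      ≤ ⨅ g : H, (expLoss ν (g : X → ℝ) fν + expLoss μ (g : X → ℝ) fμ) :=
    le_ciInf fun g => by
      linarith [expLoss_le_add_jointError hW hK (hHb h hh) (hHb g g.2) hfμb hfνb (hHm h hh)
        (hHm g g.2) hfμm hfνm (hHl h hh) (hHl g g.2)]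
  linarith

end Loss

lemma le_sum_mul_of_forall_le {ι R : Type*} [CommSemiring R] [PartialOrder R]
    [IsOrderedRing R] {s : Finset ι} {α b : ι → R} {a : R} (hα0 : ∀ i ∈ s, 0 ≤ α i)
    (hα1 : ∑ i ∈ s, α i = 1) (hab : ∀ i ∈ s, a ≤ b i) : a ≤ ∑ i ∈ s, α i * b i :=
  calc a = ∑ i ∈ s, α i * a := by rw [← Finset.sum_mul, hα1, one_mul]
    _ ≤ ∑ i ∈ s, α i * b i :=
        Finset.sum_le_sum fun i hi => mul_le_mul_of_nonneg_left (hab i hi) (hα0 i hi)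

theorem per_task_weighted_bound_general
    {X : Type*} [MetricSpace X] [MeasurableSpace X]
    (K : ℝ) (hK : 0 < K)
    (H : Set (X → ℝ))
    (hHb : ∀ g ∈ H, BoundedFun g)
    (hHm : ∀ g ∈ H, Measurable g)
    (hHl : ∀ g ∈ H, LipschitzCoef K g)
    (T : ℕ)
    (D : Fin T → Measure X) (hD : ∀ j, IsProbabilityMeasure (D j))
    (f : Fin T → X → ℝ)
    (hfb : ∀ j, BoundedFun (f j)) (hfm : ∀ j, Measurable (f j))
    (t : Fin T)
    (α : Fin T → ℝ) (hα0 : ∀ i, 0 ≤ α i) (hα1 : ∑ i, α i = 1)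
    (W : Fin T → ℝ) (hW : ∀ i, DualWassersteinBound (D i) (D t) (W i))
    (h : X → ℝ) (hh : h ∈ H) :
    expLoss (D t) h (f t) ≤
      (∑ i, α i * expLoss (D i) h (f i))
      + (∑ i, α i * (⨅ g : H, (expLoss (D t) (g : X → ℝ) (f t)
            + expLoss (D i) (g : X → ℝ) (f i))))
      + 2 * K * ∑ i, α i * W i := by
  have := hD
  refine (le_sum_mul_of_forall_le (fun i _ => hα0 i) hα1 fun i _ =>
    expLoss_le_add_iInf_jointError (hW i) hK hHb hHm hHl hh (hfb i) (hfb t) (hfm i)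
      (hfm t)).trans_eq ?_
  simp only [mul_add, Finset.sum_add_distrib, Finset.mul_sum]
  congr 1
  exact Finset.sum_congr rfl fun i _ => by ring

/-- Per-task weighted bound (Step 1 of the proof of Theorem 1):
`L_t(h) ≤ Σ_i α_i L_i(h) + Σ_i α_i ξ_{t,i} + 2K Σ_i α_i W_i`,
where `ξ_{t,i} = inf_{g ∈ H} (L_t(g) + L_i(g))`. -/
theorem per_task_weighted_bound
    {X : Type*} [MetricSpace X] [MeasurableSpace X] [BorelSpace X]
    (K : ℝ) (hK : 0 < K)
    (H : Set (X → ℝ)) (hHne : H.Nonempty)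
    (hHb : ∀ g ∈ H, BoundedFun g)
    (hHm : ∀ g ∈ H, Measurable g)
    (hHl : ∀ g ∈ H, LipschitzCoef K g)
    (T : ℕ)
    (D : Fin T → Measure X) (hD : ∀ j, IsProbabilityMeasure (D j))
    (f : Fin T → X → ℝ)
    (hfb : ∀ j, BoundedFun (f j)) (hfm : ∀ j, Measurable (f j))
    (t : Fin T)
    (α : Fin T → ℝ) (hα0 : ∀ i, 0 ≤ α i) (hα1 : ∑ i, α i = 1)
    (W : Fin T → ℝ) (hW : ∀ i, DualWassersteinBound (D i) (D t) (W i))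
    (h : X → ℝ) (hh : h ∈ H) :
    expLoss (D t) h (f t) ≤
      (∑ i, α i * expLoss (D i) h (f i))
      + (∑ i, α i * (⨅ g : H, (expLoss (D t) (g : X → ℝ) (f t)
            + expLoss (D i) (g : X → ℝ) (f i))))
      + 2 * K * ∑ i, α i * W i :=
  per_task_weighted_bound_general K hK H hHb hHm hHl T D hD f hfb hfm t α hα0 hα1 W hW h hh
end
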